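/- For Gaussian densities, the L¹ distance is Lipschitz in the mean: for any μ₁, μ₂ ∈ ℝ and σ > 0, ∫_ℝ |φ_{μ₁,σ}(y) − φ_{μ₂,σ}(y)| dy ≤ (√(2/π)/σ) |μ₁ − μ₂|, where φ_{μ,σ} is the density of N(μ, σ²). -/

import Mathlib

open Real MeasureTheory Set

/-- Gaussian density with mean μ and standard deviation σ. -/
noncomputable def gaussDens (μ σ y : ℝ) : ℝ :=
  (1 / (σ * Real.sqrt (2 * π))) * Real.exp (-(y - μ) ^ 2 / (2 * σ ^ 2))

lemma integrable_gaussDens (μ σ : ℝ) (hσ : 0 < σ) : Integrable (gaussDens μ σ) := by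
  have h : (0:ℝ) < 1/(2*σ^2) := by positivity
  have h1 : Integrable (fun y : ℝ => Real.exp (-(1/(2*σ^2)) * y ^ 2)) :=
    integrable_exp_neg_mul_sq h
  have h2 := (h1.comp_sub_right μ).const_mul (1 / (σ * Real.sqrt (2 * π)))
  refine h2.congr ?_
  filter_upwards with y
  simp only [gaussDens]
  ring_nf

lemma integral_gaussDens (μ σ : ℝ) (hσ : 0 < σ) : ∫ y, gaussDens μ σ y = 1 := by
  have key : ∫ y : ℝ, Real.exp (-(1/(2*σ^2)) * y ^ 2) = Real.sqrt (π / (1/(2*σ^2))) :=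
    integral_gaussian _
  have h2 : ∫ y, gaussDens μ σ y
      = (1 / (σ * Real.sqrt (2 * π))) * ∫ y : ℝ, Real.exp (-(1/(2*σ^2)) * ((y - μ) ^ 2)) := by
    rw [← integral_const_mul]
    congr 1; ext y; simp only [gaussDens]; ring_nf
  rw [h2, integral_sub_right_eq_self (fun y : ℝ => Real.exp (-(1/(2*σ^2)) * y ^ 2)) μ, key]
  have : π / (1/(2*σ^2)) = 2 * π * σ^2 := by field_simp
  rw [this, show 2 * π * σ^2 = (2*π) * σ^2 by ring, Real.sqrt_mul (by positivity) (σ^2),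
    Real.sqrt_sq hσ.le]
  have hs : Real.sqrt (2*π) ≠ 0 := by positivity
  field_simp

lemma integral_Iic_comp_add_right (f : ℝ → ℝ) (m d : ℝ) :
    ∫ y in Iic m, f (y + d) = ∫ y in Iic (m + d), f y := by
  have A : MeasurePreserving (fun y : ℝ => y + d) volume volume :=
    measurePreserving_add_right volume d
  have B : MeasurableEmbedding (fun y : ℝ => y + d) :=
    (Homeomorph.addRight d).measurableEmbedding
  have h := A.setIntegral_preimage_emb B f (Iic (m + d))
  simpa using h

lemma gauss_key (μ₁ μ₂ σ : ℝ) (hσ : 0 < σ) (hle : μ₂ ≤ μ₁) :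
    (∫ y, |gaussDens μ₁ σ y - gaussDens μ₂ σ y|)
      ≤ Real.sqrt (2 / π) / σ * |μ₁ - μ₂| := by
  set m := (μ₁ + μ₂) / 2 with hm
  have h1 := integrable_gaussDens μ₁ σ hσ
  have h2 := integrable_gaussDens μ₂ σ hσ
  have habs : Integrable (fun y => |gaussDens μ₁ σ y - gaussDens μ₂ σ y|) := (h1.sub h2).abs
  have h2σ : (0:ℝ) < 2*σ^2 := by positivity
  have hcomp : ∀ y, y ≤ m → gaussDens μ₁ σ y ≤ gaussDens μ₂ σ y := by
    intro y hy
    unfold gaussDens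
    apply mul_le_mul_of_nonneg_left _ (by positivity)
    apply Real.exp_le_exp.2
    exact (div_le_div_iff_of_pos_right h2σ).2 (by nlinarith)
  have hcomp' : ∀ y, m ≤ y → gaussDens μ₂ σ y ≤ gaussDens μ₁ σ y := by
    intro y hy
    unfold gaussDens
    apply mul_le_mul_of_nonneg_left _ (by positivity)
    apply Real.exp_le_exp.2
    exact (div_le_div_iff_of_pos_right h2σ).2 (by nlinarith)
  have hsplit := intervalIntegral.integral_Iic_add_Ioi (μ := volume) (b := m)
    habs.integrableOn habs.integrableOn
  rw [← hsplit]
  have e1 : ∫ y in Iic m, |gaussDens μ₁ σ y - gaussDens μ₂ σ y|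
      = ∫ y in Iic m, (gaussDens μ₂ σ y - gaussDens μ₁ σ y) := by
    apply setIntegral_congr_fun measurableSet_Iic
    intro y hy
    dsimp only
    rw [abs_sub_comm, abs_of_nonneg (sub_nonneg.2 (hcomp y hy))]
  have e2 : ∫ y in Ioi m, |gaussDens μ₁ σ y - gaussDens μ₂ σ y|
      = ∫ y in Ioi m, (gaussDens μ₁ σ y - gaussDens μ₂ σ y) := by
    apply setIntegral_congr_fun measurableSet_Ioi
    intro y hy
    dsimp only
    exact abs_of_nonneg (sub_nonneg.2 (hcomp' y hy.le))
  rw [e1, e2, integral_sub h2.integrableOn h1.integrableOn,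
    integral_sub h1.integrableOn h2.integrableOn]
  set F₁ := ∫ y in Iic m, gaussDens μ₁ σ y with hF1
  set F₂ := ∫ y in Iic m, gaussDens μ₂ σ y with hF2
  have t1 : ∫ y in Ioi m, gaussDens μ₁ σ y = 1 - F₁ := by
    have h := intervalIntegral.integral_Iic_add_Ioi (μ := volume) (b := m) h1.integrableOn h1.integrableOn
    rw [integral_gaussDens μ₁ σ hσ] at h; linarith
  have t2 : ∫ y in Ioi m, gaussDens μ₂ σ y = 1 - F₂ := by
    have h := intervalIntegral.integral_Iic_add_Ioi (μ := volume) (b := m) h2.integrableOn h2.integrableOn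
    rw [integral_gaussDens μ₂ σ hσ] at h; linarith
  rw [t1, t2]
  have shift : F₂ = ∫ y in Iic (m + (μ₁ - μ₂)), gaussDens μ₁ σ y := by
    rw [← integral_Iic_comp_add_right (gaussDens μ₁ σ) m (μ₁ - μ₂)]
    apply setIntegral_congr_fun measurableSet_Iic
    intro y _
    simp only [gaussDens]
    ring_nf
  have hdiff : F₂ - F₁ = ∫ y in m..(m + (μ₁ - μ₂)), gaussDens μ₁ σ y := by
    rw [shift, hF1, ← intervalIntegral.integral_Iic_sub_Iic h1.integrableOn h1.integrableOn]
  have hbound : ∫ y in m..(m + (μ₁ - μ₂)), gaussDens μ₁ σ y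
      ≤ (μ₁ - μ₂) * (1 / (σ * Real.sqrt (2 * π))) := by
    have hc : ∀ y ∈ Icc m (m + (μ₁ - μ₂)), gaussDens μ₁ σ y ≤ 1 / (σ * Real.sqrt (2 * π)) := by
      intro y _
      unfold gaussDens
      nth_rewrite 2 [show (1:ℝ) / (σ * Real.sqrt (2*π)) = 1 / (σ * Real.sqrt (2*π)) * 1 by ring]
      apply mul_le_mul_of_nonneg_left _ (by positivity)
      exact Real.exp_le_one_iff.2 (div_nonpos_of_nonpos_of_nonneg (neg_nonpos.2 (sq_nonneg _)) h2σ.le)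
    have hmono := intervalIntegral.integral_mono_on (by linarith : m ≤ m + (μ₁ - μ₂))
      h1.intervalIntegrable intervalIntegrable_const hc
    rw [intervalIntegral.integral_const] at hmono
    simpa using hmono
  have hsqrt : Real.sqrt (2 / π) = 2 / Real.sqrt (2 * π) := by
    rw [show (2:ℝ) / π = 2^2 / (2*π) by field_simp,
      Real.sqrt_div (by norm_num) (2*π), Real.sqrt_sq (by norm_num : (0:ℝ) ≤ 2)]
  have habs' : |μ₁ - μ₂| = μ₁ - μ₂ := abs_of_nonneg (by linarith)
  have hπ : (0:ℝ) < Real.sqrt (2*π) := by positivity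
  rw [habs', hsqrt]
  calc F₂ - F₁ + (1 - F₁ - (1 - F₂)) = 2 * (F₂ - F₁) := by ring
    _ ≤ 2 * ((μ₁ - μ₂) * (1 / (σ * Real.sqrt (2 * π)))) := by
        rw [hdiff] at *; linarith [hbound]
    _ = 2 / Real.sqrt (2 * π) / σ * (μ₁ - μ₂) := by
        field_simp

/-- The L¹ distance between Gaussian densities with common variance is Lipschitz in the
mean: `∫ |φ_{μ₁,σ} − φ_{μ₂,σ}| ≤ (√(2/π)/σ) |μ₁ − μ₂|`. -/
theorem gaussian_L1_lipschitz_in_mean (μ₁ μ₂ σ : ℝ) (hσ : 0 < σ) :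
    (∫ y, |gaussDens μ₁ σ y - gaussDens μ₂ σ y|)
      ≤ Real.sqrt (2 / π) / σ * |μ₁ - μ₂| := by
  rcases le_total μ₂ μ₁ with h | h
  · exact gauss_key μ₁ μ₂ σ hσ h
  · have e : ∀ y, |gaussDens μ₁ σ y - gaussDens μ₂ σ y|
        = |gaussDens μ₂ σ y - gaussDens μ₁ σ y| := fun y => abs_sub_comm _ _
    simp_rw [e, abs_sub_comm μ₁ μ₂]
    exact gauss_key μ₂ μ₁ σ hσ h
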